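/- arXiv:0806.1022 — 4 statements merged into one kernel-verified Lean document; each statement's English description precedes it below -/
import Mathlib

section
/- Let p : 𝔅 → G be an upper semicontinuous Banach bundle over a second countable locally compact Hausdorff space G and let ν be a generalized Radon measure on 𝔅. Then there is a Radon measure μ on G such that for every nonnegative φ ∈ C_c(G), ∫_G φ dμ = sup{ |ν(f)| : f ∈ Γ_c(G;𝔅) and ‖f(x)‖ ≤ φ(x) for all x ∈ G }. -/
/-!
For `0 ≤ φ ∈ C_c(G)` put `|ν|(φ) := sup {‖ν f‖ : f ∈ Γ_c(G;𝔅), ‖f‖ ≤ φ}`. This is additive and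
positively homogeneous. Superadditivity comes from rotating the phases of `ν f` and `ν g`.
For subadditivity, a section `f` with `‖f‖ ≤ φ + ψ` is split along the partition of unity
`φ / d + ψ / d + ε / d = 1`, where `d = φ + ψ + ε`; the last piece is small because continuity in
the inductive limit topology makes `ν` bounded on sections of norm `≤ 1` supported in a fixed
compact set. So `|ν|` is a positive linear functional on `C_c(G, ℝ≥0)`, and `μ` is its
Riesz–Markov–Kakutani measure.
-/

open MeasureTheory Filter Topology Set

/-- An upper semicontinuous Banach bundle over a topological space `X`, with fibres
`Fib x` (each a complex Banach space), total space `(x : X) × Fib x` and bundle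
projection `Sigma.fst`.  The axioms are (B1)–(B4) of the paper, together with the
standing assumption that the bundle has enough sections. -/
structure USCBanachBundle (X : Type) [TopologicalSpace X] (Fib : X → Type)
    [∀ x, NormedAddCommGroup (Fib x)] [∀ x, NormedSpace ℂ (Fib x)]
    [∀ x, CompleteSpace (Fib x)] : Type where
  /-- the topology on the total space `Σ x, Fib x` -/
  topTotal : TopologicalSpace ((x : X) × Fib x)
  /-- the projection is continuous -/
  continuous_proj : @Continuous ((x : X) × Fib x) X topTotal inferInstance
    fun b => b.1
  /-- the projection is an open map -/
  isOpenMap_proj : @IsOpenMap ((x : X) × Fib x) X topTotal inferInstance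
    fun b => b.1
  /-- (B1): the norm is upper semicontinuous on the total space -/
  isOpen_norm_lt : ∀ r : ℝ, @IsOpen ((x : X) × Fib x) topTotal { b | ‖b.2‖ < r }
  /-- (B2): addition is continuous on pairs lying in a common fibre -/
  continuous_add :
    @Continuous { q : ((x : X) × Fib x) × ((x : X) × Fib x) // q.1.1 = q.2.1 }
      ((x : X) × Fib x)
      (@instTopologicalSpaceSubtype _ _
        (@instTopologicalSpaceProd _ _ topTotal topTotal))
      topTotal
      (fun q => ⟨q.1.1.1, q.1.1.2 + cast (congrArg Fib q.2.symm) q.1.2.2⟩)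
  /-- (B3): scalar multiplication is continuous -/
  continuous_smul : ∀ c : ℂ,
    @Continuous ((x : X) × Fib x) ((x : X) × Fib x) topTotal topTotal
      fun b => ⟨b.1, c • b.2⟩
  /-- (B4): if `p (a i) → x` and `‖a i‖ → 0` then `a i → 0ₓ` (stated for filters,
  which is equivalent to the statement for nets) -/
  tendsto_zero : ∀ {ι : Type} (l : Filter ι) (a : ι → (x : X) × Fib x) (x : X),
    Filter.Tendsto (fun i => (a i).1) l (nhds x) →
    Filter.Tendsto (fun i => ‖(a i).2‖) l (nhds (0 : ℝ)) →
    Filter.Tendsto a l (@nhds _ topTotal (⟨x, 0⟩ : (x : X) × Fib x))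
  /-- the bundle has enough sections -/
  enough_sections : ∀ (x : X) (v : Fib x), ∃ f : ∀ y, Fib y,
    (@Continuous X ((x : X) × Fib x) inferInstance topTotal fun y => ⟨y, f y⟩) ∧
      f x = v

namespace USCBanachBundle

variable {X : Type} [TopologicalSpace X] {Fib : X → Type}
  [∀ x, NormedAddCommGroup (Fib x)] [∀ x, NormedSpace ℂ (Fib x)]
  [∀ x, CompleteSpace (Fib x)]

/-- `f` is a continuous (global) section of the bundle `B`. -/
def IsContSection (B : USCBanachBundle X Fib) (f : ∀ x, Fib x) : Prop :=
  @Continuous X ((x : X) × Fib x) inferInstance B.topTotal fun x => ⟨x, f x⟩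

/-- membership in `Γ_c(X;𝔅)`: continuous compactly supported sections. -/
def MemGammaC (B : USCBanachBundle X Fib) (f : ∀ x, Fib x) : Prop :=
  B.IsContSection f ∧ ∃ K : Set X, IsCompact K ∧ ∀ x ∉ K, f x = 0

/-- membership in `Γ₀(X;𝔅)`: continuous sections vanishing at infinity. -/
def MemGammaZero (B : USCBanachBundle X Fib) (f : ∀ x, Fib x) : Prop :=
  B.IsContSection f ∧ ∀ ε : ℝ, 0 < ε → IsCompact { x | ε ≤ ‖f x‖ }

/-- The Banach space `Γ₀(X;𝔅)` is separable: there is a countable set of sections in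
`Γ₀` which is dense for the supremum norm. -/
def SeparableGammaZero (B : USCBanachBundle X Fib) : Prop :=
  ∃ D : Set (∀ x, Fib x), D.Countable ∧ (∀ g ∈ D, B.MemGammaZero g) ∧
    ∀ f, B.MemGammaZero f → ∀ ε : ℝ, 0 < ε → ∃ g ∈ D, ∀ x, ‖f x - g x‖ < ε

/-- uniform convergence of a sequence of sections to a section. -/
def UnifTendsto (B : USCBanachBundle X Fib) (F : ℕ → ∀ x, Fib x)
    (f : ∀ x, Fib x) : Prop :=
  ∀ ε : ℝ, 0 < ε → ∃ N : ℕ, ∀ n ≥ N, ∀ x, ‖F n x - f x‖ < ε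

/-- continuity of `ν` in the inductive limit topology: `ν fₙ → ν f` whenever `fₙ → f`
uniformly with all supports contained in a fixed compact set. -/
def ILTContinuous (B : USCBanachBundle X Fib) (ν : (∀ x, Fib x) → ℂ) : Prop :=
  ∀ (F : ℕ → ∀ x, Fib x) (f : ∀ x, Fib x) (K : Set X),
    (∀ n, B.MemGammaC (F n)) → B.MemGammaC f → IsCompact K →
    (∀ n, ∀ x ∉ K, F n x = 0) → B.UnifTendsto F f →
    Filter.Tendsto (fun n => ν (F n)) Filter.atTop (nhds (ν f))

/-- a generalized Radon measure on the bundle `B`: a linear functional on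
`Γ_c(X;𝔅)` which is continuous in the inductive limit topology. -/
def IsGRM (B : USCBanachBundle X Fib) (ν : (∀ x, Fib x) → ℂ) : Prop :=
  (∀ f g, B.MemGammaC f → B.MemGammaC g →
    ν (fun x => f x + g x) = ν f + ν g) ∧
  (∀ (c : ℂ) (f), B.MemGammaC f → ν (fun x => c • f x) = c * ν f) ∧
  B.ILTContinuous ν

/-- `μ` is the total variation `|ν|` of the generalized Radon measure `ν`: a Radon
measure (Borel measure, finite on compacts) such that for every nonnegative
`φ ∈ C_c(X)`, `∫ φ dμ = sup { |ν f| : f ∈ Γ_c(X;𝔅), ‖f x‖ ≤ φ x for all x }`. -/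
def IsTotalVariation [MeasurableSpace X] (B : USCBanachBundle X Fib)
    (ν : (∀ x, Fib x) → ℂ) (μ : Measure X) : Prop :=
  (∀ K : Set X, IsCompact K → μ K < ⊤) ∧
  ∀ φ : X → ℝ, Continuous φ → HasCompactSupport φ → (∀ x, 0 ≤ φ x) →
    ∫ x, φ x ∂μ =
      sSup { r : ℝ | ∃ f, B.MemGammaC f ∧ (∀ x, ‖f x‖ ≤ φ x) ∧ r = ‖ν f‖ }

/-- membership in `Σ_c(X;𝔅)`: bounded sections which are pointwise limits (in the
topology of the total space) of a uniformly bounded sequence in `Γ_c(X;𝔅)` whose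
supports are contained in a fixed compact set. -/
def MemSigmaC (B : USCBanachBundle X Fib) (f : ∀ x, Fib x) : Prop :=
  (∃ M : ℝ, ∀ x, ‖f x‖ ≤ M) ∧
  ∃ (F : ℕ → ∀ x, Fib x) (K : Set X) (M : ℝ),
    (∀ n, B.MemGammaC (F n)) ∧ (∀ n x, ‖F n x‖ ≤ M) ∧ IsCompact K ∧
    (∀ n, ∀ x ∉ K, F n x = 0) ∧
    ∀ x, Filter.Tendsto (fun n => (⟨x, F n x⟩ : (x : X) × Fib x)) Filter.atTop
      (@nhds _ B.topTotal (⟨x, f x⟩ : (x : X) × Fib x))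

end USCBanachBundle

open scoped NNReal CompactlySupported Pointwise

theorem Complex.exists_norm_eq_one_mul_eq_norm (z : ℂ) : ∃ c : ℂ, ‖c‖ = 1 ∧ c * z = ‖z‖ := by
  rcases eq_or_ne z 0 with rfl | hz
  · exact ⟨1, by simp, by simp⟩
  · refine ⟨‖z‖ / z, ?_, div_mul_cancel₀ _ hz⟩
    rw [norm_div, Complex.norm_real, norm_norm, div_self (norm_ne_zero_iff.2 hz)]

theorem norm_ofReal_div_smul_le {E : Type*} [NormedAddCommGroup E] [NormedSpace ℂ E]
    {w d : ℝ} {v : E} (hw : 0 ≤ w) (hv : ‖v‖ ≤ d) : ‖((w / d : ℝ) : ℂ) • v‖ ≤ w := by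
  rw [norm_smul, Complex.norm_real, Real.norm_eq_abs]
  obtain hd | hd := ((norm_nonneg v).trans hv).eq_or_lt
  · simp [← hd, hw]
  rw [abs_of_nonneg (div_nonneg hw hd.le)]
  calc w / d * ‖v‖ ≤ w / d * d := by gcongr
    _ = w := div_mul_cancel₀ w hd.ne'

namespace USCBanachBundle

variable {X : Type} [TopologicalSpace X] {Fib : X → Type}
  [∀ x, NormedAddCommGroup (Fib x)] [∀ x, NormedSpace ℂ (Fib x)]
  [∀ x, CompleteSpace (Fib x)] {B : USCBanachBundle X Fib} {f g : ∀ x, Fib x}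

def IsContSectionAt (B : USCBanachBundle X Fib) (f : ∀ x, Fib x) (x₀ : X) : Prop :=
  @ContinuousAt X ((x : X) × Fib x) _ B.topTotal (fun x => ⟨x, f x⟩) x₀

theorem isContSection_iff : B.IsContSection f ↔ ∀ x, B.IsContSectionAt f x :=
  @continuous_iff_continuousAt X _ _ B.topTotal _

theorem isContSectionAt_of_tendsto_norm {x₀ : X} (hf₀ : f x₀ = 0)
    (hf : Tendsto (fun x => ‖f x‖) (𝓝 x₀) (𝓝 0)) : B.IsContSectionAt f x₀ := by
  show Tendsto _ _ (@nhds _ B.topTotal ⟨x₀, f x₀⟩)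
  rw [hf₀]
  exact B.tendsto_zero _ _ x₀ tendsto_id hf

theorem IsContSectionAt.add {x₀ : X} (hf : B.IsContSectionAt f x₀)
    (hg : B.IsContSectionAt g x₀) : B.IsContSectionAt (fun x => f x + g x) x₀ := by
  let := B.topTotal
  have hpair : ContinuousAt (fun x => (⟨(⟨x, f x⟩, ⟨x, g x⟩), rfl⟩ :
      { q : ((x : X) × Fib x) × ((x : X) × Fib x) // q.1.1 = q.2.1 })) x₀ := by
    rw [ContinuousAt, tendsto_subtype_rng]
    exact hf.prodMk hg
  exact B.continuous_add.continuousAt.comp hpair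

variable (B) in
theorem isContSection_zero : B.IsContSection 0 :=
  isContSection_iff.2 fun _ => isContSectionAt_of_tendsto_norm rfl (by simp)

theorem IsContSection.add (hf : B.IsContSection f) (hg : B.IsContSection g) :
    B.IsContSection fun x => f x + g x :=
  isContSection_iff.2 fun x => (isContSection_iff.1 hf x).add (isContSection_iff.1 hg x)

theorem IsContSection.const_smul (c : ℂ) (hf : B.IsContSection f) :
    B.IsContSection fun x => c • f x :=
  @Continuous.comp _ _ _ _ B.topTotal B.topTotal _ _ (B.continuous_smul c) hf

theorem IsContSection.isOpen_norm_lt (hf : B.IsContSection f) (r : ℝ) :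
    IsOpen {x | ‖f x‖ < r} :=
  @IsOpen.preimage _ _ _ B.topTotal _ hf _ (B.isOpen_norm_lt r)

theorem IsContSection.smul {h : X → ℂ} (hh : Continuous h) (hf : B.IsContSection f) :
    B.IsContSection fun x => h x • f x := by
  refine isContSection_iff.2 fun x₀ => ?_
  -- `h x • f x = h x₀ • f x + (h x - h x₀) • f x`, and the second term tends to `0` in norm
  -- because `‖f‖` is locally bounded by (B1).
  have hbdd : ∀ᶠ x in 𝓝 x₀, ‖f x‖ < ‖f x₀‖ + 1 :=
    (hf.isOpen_norm_lt _).mem_nhds (lt_add_one ‖f x₀‖)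
  have hsmall : Tendsto (fun x => ‖(h x - h x₀) • f x‖) (𝓝 x₀) (𝓝 0) := by
    have hlim : Tendsto (fun x => ‖h x - h x₀‖ * (‖f x₀‖ + 1)) (𝓝 x₀) (𝓝 0) := by
      simpa using ((hh.tendsto x₀).sub_const (h x₀)).norm.mul_const (‖f x₀‖ + 1)
    refine squeeze_zero' (.of_forall fun _ => norm_nonneg _) ?_ hlim
    filter_upwards [hbdd] with x hx
    rw [norm_smul]
    gcongr
  have hsum := (isContSection_iff.1 (hf.const_smul (h x₀)) x₀).add
    (isContSectionAt_of_tendsto_norm (by simp) hsmall)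
  convert hsum using 3 with x
  rw [← add_smul, add_sub_cancel]

variable (B) in
theorem memGammaC_zero : B.MemGammaC 0 :=
  ⟨isContSection_zero B, ∅, isCompact_empty, fun _ _ => rfl⟩

theorem MemGammaC.add (hf : B.MemGammaC f) (hg : B.MemGammaC g) :
    B.MemGammaC fun x => f x + g x := by
  obtain ⟨hfc, K, hK, hfK⟩ := hf
  obtain ⟨hgc, L, hL, hgL⟩ := hg
  refine ⟨hfc.add hgc, K ∪ L, hK.union hL, fun x hx => ?_⟩
  rw [mem_union, not_or] at hx
  simp [hfK x hx.1, hgL x hx.2]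

theorem MemGammaC.smul {h : X → ℂ} (hh : Continuous h) (hf : B.MemGammaC f) :
    B.MemGammaC fun x => h x • f x := by
  obtain ⟨hfc, K, hK, hfK⟩ := hf
  exact ⟨hfc.smul hh, K, hK, fun x hx => by simp [hfK x hx]⟩

theorem MemGammaC.const_smul (c : ℂ) (hf : B.MemGammaC f) :
    B.MemGammaC fun x => c • f x :=
  hf.smul continuous_const

variable {ν : (∀ x, Fib x) → ℂ}

namespace IsGRM

theorem map_add (hν : B.IsGRM ν) (hf : B.MemGammaC f) (hg : B.MemGammaC g) :
    ν (fun x => f x + g x) = ν f + ν g :=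
  hν.1 f g hf hg

theorem map_smul (hν : B.IsGRM ν) (c : ℂ) (hf : B.MemGammaC f) :
    ν (fun x => c • f x) = c * ν f :=
  hν.2.1 c f hf

theorem map_zero (hν : B.IsGRM ν) : ν 0 = 0 := by
  have h := hν.map_smul 0 (memGammaC_zero B)
  simp only [zero_smul, zero_mul] at h
  exact h

theorem bddAbove_norm_of_isCompact (hν : B.IsGRM ν) {K : Set X} (hK : IsCompact K) :
    BddAbove {r | ∃ f, B.MemGammaC f ∧ (∀ x ∉ K, f x = 0) ∧ (∀ x, ‖f x‖ ≤ 1) ∧ r = ‖ν f‖} := by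
  -- otherwise rescaling gives sections tending to `0` uniformly inside `K` with `‖ν g‖ > 1`
  by_contra hunb
  have hlarge (n : ℕ) : ∃ f, B.MemGammaC f ∧ (∀ x ∉ K, f x = 0) ∧ (∀ x, ‖f x‖ ≤ 1) ∧
      (n + 1 : ℝ) < ‖ν f‖ := by
    obtain ⟨_, ⟨f, hf, hfK, hf1, rfl⟩, hlt⟩ := not_bddAbove_iff.1 hunb (n + 1)
    exact ⟨f, hf, hfK, hf1, hlt⟩
  choose F hF hFK hF1 hνF using hlarge
  set g : ℕ → ∀ x, Fib x := fun n x => ((n + 1 : ℕ) : ℂ)⁻¹ • F n x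
  have hg (n : ℕ) : B.MemGammaC (g n) := (hF n).const_smul _
  have hg_norm (n : ℕ) (x : X) : ‖g n x‖ ≤ 1 / (n + 1) := by
    simp only [g]
    rw [norm_smul, norm_inv, Complex.norm_natCast, Nat.cast_succ, ← div_eq_inv_mul]
    gcongr
    exact hF1 n x
  have hg_unif : B.UnifTendsto g 0 := fun ε hε => by
    obtain ⟨N, hN⟩ := exists_nat_one_div_lt hε
    refine ⟨N, fun n hn x => ?_⟩
    calc ‖g n x - (0 : ∀ x, Fib x) x‖ = ‖g n x‖ := by simp
      _ ≤ 1 / (n + 1) := hg_norm n x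
      _ ≤ 1 / (N + 1) := by gcongr
      _ < ε := hN
  have hlim := hν.2.2 g 0 K hg (memGammaC_zero B) hK
    (fun n x hx => by simp [g, hFK n x hx]) hg_unif
  rw [hν.map_zero] at hlim
  obtain ⟨n, hn⟩ := (hlim.norm.eventually (gt_mem_nhds (by simp : ‖(0 : ℂ)‖ < 1))).exists
  have : 1 < ‖ν (g n)‖ := by
    rw [hν.map_smul _ (hF n), norm_mul, norm_inv, Complex.norm_natCast, ← div_eq_inv_mul,
      one_lt_div (by positivity)]
    exact_mod_cast hνF n
  linarith

theorem exists_norm_le (hν : B.IsGRM ν) {K : Set X} (hK : IsCompact K) :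
    ∃ C, 0 < C ∧ ∀ f, B.MemGammaC f → (∀ x ∉ K, f x = 0) →
      ∀ M, 0 < M → (∀ x, ‖f x‖ ≤ M) → ‖ν f‖ ≤ C * M := by
  obtain ⟨C, hC⟩ := hν.bddAbove_norm_of_isCompact hK
  refine ⟨max C 1, by positivity, fun f hf hfK M hM hfM => ?_⟩
  have hM' : ‖(M : ℂ)⁻¹‖ = M⁻¹ := by simp [abs_of_pos hM]
  have hscaled : M⁻¹ * ‖ν f‖ ≤ C := by
    refine hC ⟨fun x => (M : ℂ)⁻¹ • f x, hf.const_smul _, fun x hx => by simp [hfK x hx],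
      fun x => ?_, ?_⟩
    · rw [norm_smul, hM', inv_mul_le_one₀ hM]
      exact hfM x
    · rw [hν.map_smul _ hf, norm_mul, hM']
  rw [inv_mul_le_iff₀ hM] at hscaled
  calc ‖ν f‖ ≤ M * C := hscaled
    _ ≤ M * max C 1 := by gcongr; exact le_max_left C 1
    _ = max C 1 * M := mul_comm _ _

end IsGRM

variable (B ν) in
def dominatedNorms (φ : X → ℝ) : Set ℝ :=
  {r | ∃ f, B.MemGammaC f ∧ (∀ x, ‖f x‖ ≤ φ x) ∧ r = ‖ν f‖}

variable (B ν) in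
noncomputable def variation (φ : X → ℝ) : ℝ :=
  sSup (B.dominatedNorms ν φ)

variable {φ ψ : X → ℝ}

theorem dominatedNorms_nonempty (hφ0 : ∀ x, 0 ≤ φ x) : (B.dominatedNorms ν φ).Nonempty :=
  ⟨_, 0, memGammaC_zero B, fun x => by simpa using hφ0 x, rfl⟩

theorem variation_nonneg : 0 ≤ B.variation ν φ :=
  Real.sSup_nonneg (by rintro _ ⟨f, -, -, rfl⟩; exact norm_nonneg _)

theorem variation_le (hφ0 : ∀ x, 0 ≤ φ x) {c : ℝ}
    (h : ∀ f, B.MemGammaC f → (∀ x, ‖f x‖ ≤ φ x) → ‖ν f‖ ≤ c) : B.variation ν φ ≤ c :=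
  csSup_le (dominatedNorms_nonempty hφ0) (by rintro _ ⟨f, hf, hfφ, rfl⟩; exact h f hf hfφ)

namespace IsGRM

theorem bddAbove_dominatedNorms (hν : B.IsGRM ν) (hφ : Continuous φ)
    (hφc : HasCompactSupport φ) : BddAbove (B.dominatedNorms ν φ) := by
  obtain ⟨C, -, hC⟩ := hν.exists_norm_le hφc
  obtain ⟨M, hM⟩ := hφ.bddAbove_range_of_hasCompactSupport hφc
  refine ⟨C * max M 1, ?_⟩
  rintro _ ⟨f, hf, hfφ, rfl⟩
  refine hC f hf (fun x hx => ?_) _ (by positivity)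
    fun x => (hfφ x).trans ((hM (mem_range_self x)).trans (le_max_left _ _))
  exact norm_le_zero_iff.1 ((hfφ x).trans_eq (image_eq_zero_of_notMem_tsupport hx))

theorem norm_le_variation (hν : B.IsGRM ν) (hφ : Continuous φ) (hφc : HasCompactSupport φ)
    (hf : B.MemGammaC f) (hfφ : ∀ x, ‖f x‖ ≤ φ x) : ‖ν f‖ ≤ B.variation ν φ :=
  le_csSup (hν.bddAbove_dominatedNorms hφ hφc) ⟨f, hf, hfφ, rfl⟩

theorem variation_const_mul_le (hν : B.IsGRM ν) (hφ : Continuous φ)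
    (hφc : HasCompactSupport φ) (hφ0 : ∀ x, 0 ≤ φ x) {c : ℝ} (hc : 0 < c) :
    B.variation ν (fun x => c * φ x) ≤ c * B.variation ν φ := by
  refine variation_le (fun x => mul_nonneg hc.le (hφ0 x)) fun f hf hfφ => ?_
  have hc' : ‖((c⁻¹ : ℝ) : ℂ)‖ = c⁻¹ := by simp [hc.le]
  have hscaled : c⁻¹ * ‖ν f‖ ≤ B.variation ν φ := by
    refine (hν.norm_le_variation hφ hφc (hf.const_smul ((c⁻¹ : ℝ) : ℂ)) fun x => ?_).trans_eq' ?_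
    · rw [norm_smul, hc', inv_mul_le_iff₀ hc]
      exact hfφ x
    · rw [hν.map_smul _ hf, norm_mul, hc']
  rwa [inv_mul_le_iff₀ hc] at hscaled

theorem variation_const_mul (hν : B.IsGRM ν) (hφ : Continuous φ)
    (hφc : HasCompactSupport φ) (hφ0 : ∀ x, 0 ≤ φ x) {c : ℝ} (hc : 0 ≤ c) :
    B.variation ν (fun x => c * φ x) = c * B.variation ν φ := by
  obtain rfl | hc := hc.eq_or_lt
  · simp only [zero_mul]
    refine le_antisymm (variation_le (fun _ => le_rfl) fun f hf hf0 => ?_) variation_nonneg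
    obtain rfl : f = 0 := funext fun x => norm_le_zero_iff.1 (hf0 x)
    rw [hν.map_zero, norm_zero]
  refine le_antisymm (hν.variation_const_mul_le hφ hφc hφ0 hc) ?_
  have h := hν.variation_const_mul_le (φ := fun x => c * φ x) (continuous_const.mul hφ)
    hφc.mul_left (fun x => mul_nonneg hc.le (hφ0 x)) (inv_pos.2 hc)
  simp only [inv_mul_cancel_left₀ hc.ne'] at h
  rwa [le_inv_mul_iff₀ hc] at h

theorem add_variation_le (hν : B.IsGRM ν)
    (hφ : Continuous φ) (hφc : HasCompactSupport φ) (hφ0 : ∀ x, 0 ≤ φ x)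
    (hψ : Continuous ψ) (hψc : HasCompactSupport ψ) (hψ0 : ∀ x, 0 ≤ ψ x) :
    B.variation ν φ + B.variation ν ψ ≤ B.variation ν (fun x => φ x + ψ x) := by
  rw [variation, variation, ← csSup_add (dominatedNorms_nonempty hφ0)
    (hν.bddAbove_dominatedNorms hφ hφc) (dominatedNorms_nonempty hψ0)
    (hν.bddAbove_dominatedNorms hψ hψc)]
  refine csSup_le ((dominatedNorms_nonempty hφ0).add (dominatedNorms_nonempty hψ0)) ?_
  rintro _ ⟨_, ⟨f, hf, hfφ, rfl⟩, _, ⟨g, hg, hgψ, rfl⟩, rfl⟩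
  -- rotating `f` and `g` so that `ν` is nonnegative on both makes `‖ν f‖ + ‖ν g‖` a value of `ν`
  obtain ⟨a, ha, haf⟩ := Complex.exists_norm_eq_one_mul_eq_norm (ν f)
  obtain ⟨b, hb, hbg⟩ := Complex.exists_norm_eq_one_mul_eq_norm (ν g)
  have hsum : ν (fun x => a • f x + b • g x) = ((‖ν f‖ + ‖ν g‖ : ℝ) : ℂ) := by
    rw [hν.map_add (hf.const_smul a) (hg.const_smul b), hν.map_smul a hf, hν.map_smul b hg,
      haf, hbg, Complex.ofReal_add]
  calc ‖ν f‖ + ‖ν g‖ = ‖ν (fun x => a • f x + b • g x)‖ := by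
        rw [hsum, Complex.norm_real, Real.norm_of_nonneg (by positivity)]
    _ ≤ B.variation ν (fun x => φ x + ψ x) :=
        hν.norm_le_variation (hφ.add hψ) (hφc.add hψc)
          ((hf.const_smul a).add (hg.const_smul b)) fun x => ?_
  calc ‖a • f x + b • g x‖ ≤ ‖a • f x‖ + ‖b • g x‖ := norm_add_le _ _
    _ = ‖f x‖ + ‖g x‖ := by rw [norm_smul, norm_smul, ha, hb, one_mul, one_mul]
    _ ≤ φ x + ψ x := add_le_add (hfφ x) (hgψ x)

theorem norm_le_variation_add_variation (hν : B.IsGRM ν)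
    (hφ : Continuous φ) (hφc : HasCompactSupport φ) (hφ0 : ∀ x, 0 ≤ φ x)
    (hψ : Continuous ψ) (hψc : HasCompactSupport ψ) (hψ0 : ∀ x, 0 ≤ ψ x)
    (hf : B.MemGammaC f) (hfφψ : ∀ x, ‖f x‖ ≤ φ x + ψ x) :
    ‖ν f‖ ≤ B.variation ν φ + B.variation ν ψ := by
  obtain ⟨K, hK, hfK⟩ := hf.2
  obtain ⟨C, hC, hCν⟩ := hν.exists_norm_le hK
  refine le_of_forall_pos_le_add fun η hη => ?_
  set ε := η / C
  have hε : 0 < ε := div_pos hη hC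
  set d : X → ℝ := fun x => φ x + ψ x + ε
  have hd (x : X) : 0 < d x := by have := hφ0 x; have := hψ0 x; positivity
  -- split `f` along the partition of unity `φ / d + ψ / d + ε / d = 1`
  let part (w : X → ℝ) : ∀ x, Fib x := fun x => ((w x / d x : ℝ) : ℂ) • f x
  have hpart {w : X → ℝ} (hw : Continuous w) : B.MemGammaC (part w) :=
    hf.smul (Complex.continuous_ofReal.comp (hw.div (by fun_prop) fun x => (hd x).ne'))
  have hpart_le {w : X → ℝ} (hw : ∀ x, 0 ≤ w x) (x : X) : ‖part w x‖ ≤ w x :=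
    norm_ofReal_div_smul_le (hw x) ((hfφψ x).trans (le_add_of_nonneg_right hε.le))
  have hsplit : f = fun x => part φ x + part ψ x + part (fun _ => ε) x := by
    funext x
    simp only [part, ← add_smul, ← Complex.ofReal_add, ← add_div, div_self (hd x).ne',
      Complex.ofReal_one, one_smul, d]
  have hpartε : ‖ν (part fun _ => ε)‖ ≤ C * ε :=
    hCν _ (hpart continuous_const) (fun x hx => by simp [part, hfK x hx]) ε hε
      (hpart_le fun _ => hε.le)
  calc ‖ν f‖ = ‖ν (part φ) + ν (part ψ) + ν (part fun _ => ε)‖ := by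
        rw [hsplit, hν.map_add ((hpart hφ).add (hpart hψ)) (hpart continuous_const),
          hν.map_add (hpart hφ) (hpart hψ)]
    _ ≤ ‖ν (part φ)‖ + ‖ν (part ψ)‖ + ‖ν (part fun _ => ε)‖ := norm_add₃_le
    _ ≤ B.variation ν φ + B.variation ν ψ + C * ε := by
        gcongr
        exacts [hν.norm_le_variation hφ hφc (hpart hφ) (hpart_le hφ0),
          hν.norm_le_variation hψ hψc (hpart hψ) (hpart_le hψ0)]
    _ = B.variation ν φ + B.variation ν ψ + η := by rw [mul_div_cancel₀ η hC.ne']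

theorem variation_add (hν : B.IsGRM ν)
    (hφ : Continuous φ) (hφc : HasCompactSupport φ) (hφ0 : ∀ x, 0 ≤ φ x)
    (hψ : Continuous ψ) (hψc : HasCompactSupport ψ) (hψ0 : ∀ x, 0 ≤ ψ x) :
    B.variation ν (fun x => φ x + ψ x) = B.variation ν φ + B.variation ν ψ :=
  le_antisymm
    (variation_le (fun x => add_nonneg (hφ0 x) (hψ0 x)) fun _ hf hfφψ =>
      hν.norm_le_variation_add_variation hφ hφc hφ0 hψ hψc hψ0 hf hfφψ)
    (hν.add_variation_le hφ hφc hφ0 hψ hψc hψ0)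

end IsGRM

theorem _root_.CompactlySupportedContinuousMap.continuous_coe_nnreal (φ : C_c(X, ℝ≥0)) :
    Continuous fun x => (φ x : ℝ) :=
  NNReal.continuous_coe.comp φ.continuous

theorem _root_.CompactlySupportedContinuousMap.hasCompactSupport_coe_nnreal
    (φ : C_c(X, ℝ≥0)) : HasCompactSupport fun x => (φ x : ℝ) :=
  φ.hasCompactSupport.comp_left NNReal.coe_zero

noncomputable def variationLinearMap (hν : B.IsGRM ν) : C_c(X, ℝ≥0) →ₗ[ℝ≥0] ℝ≥0 where
  toFun φ := ⟨B.variation ν fun x => φ x, variation_nonneg⟩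
  map_add' φ ψ := NNReal.eq <| hν.variation_add φ.continuous_coe_nnreal
    φ.hasCompactSupport_coe_nnreal (fun x => (φ x).2) ψ.continuous_coe_nnreal
    ψ.hasCompactSupport_coe_nnreal fun x => (ψ x).2
  map_smul' c φ := NNReal.eq <| hν.variation_const_mul φ.continuous_coe_nnreal
    φ.hasCompactSupport_coe_nnreal (fun x => (φ x).2) c.2

theorem variationLinearMap_apply (hν : B.IsGRM ν) (φ : C_c(X, ℝ≥0)) :
    (B.variationLinearMap hν φ : ℝ) = B.variation ν fun x => φ x :=
  rfl

theorem integral_rieszMeasure_variationLinearMap [LocallyCompactSpace X] [T2Space X]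
    [MeasurableSpace X] [BorelSpace X] (hν : B.IsGRM ν) (hφ : Continuous φ)
    (hφc : HasCompactSupport φ) (hφ0 : ∀ x, 0 ≤ φ x) :
    ∫ x, φ x ∂NNRealRMK.rieszMeasure (B.variationLinearMap hν) = B.variation ν φ := by
  set φ' := (⟨⟨φ, hφ⟩, hφc⟩ : C_c(X, ℝ)).nnrealPart
  have hφ' : (fun x => (φ' x : ℝ)) = φ := funext fun x => Real.coe_toNNReal _ (hφ0 x)
  calc ∫ x, φ x ∂NNRealRMK.rieszMeasure (B.variationLinearMap hν)
      = B.variationLinearMap hν φ' := by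
        rw [← NNRealRMK.integral_rieszMeasure, hφ']
    _ = B.variation ν φ := by rw [variationLinearMap_apply, hφ']

end USCBanachBundle

theorem USCBanachBundle.exists_total_variation_general
    {G : Type} [TopologicalSpace G]
    [LocallyCompactSpace G] [T2Space G]
    [MeasurableSpace G] [BorelSpace G]
    {Fib : G → Type}
    [∀ x, NormedAddCommGroup (Fib x)] [∀ x, NormedSpace ℂ (Fib x)]
    [∀ x, CompleteSpace (Fib x)]
    (B : USCBanachBundle G Fib)
    (ν : (∀ x, Fib x) → ℂ) (hν : B.IsGRM ν) :
    ∃ μ : Measure G, (∀ K : Set G, IsCompact K → μ K < ⊤) ∧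
      ∀ φ : G → ℝ, Continuous φ → HasCompactSupport φ → (∀ x, 0 ≤ φ x) →
        ∫ x, φ x ∂μ =
          sSup { r : ℝ | ∃ f, B.MemGammaC f ∧ (∀ x, ‖f x‖ ≤ φ x) ∧ r = ‖ν f‖ } :=
  ⟨_, fun K hK => hK.measure_lt_top,
    fun φ hφ hφc hφ0 => B.integral_rieszMeasure_variationLinearMap hν hφ hφc hφ0⟩

/-- Lemma 3.1 of the paper: every generalized Radon measure `ν` on an
upper semicontinuous Banach bundle over a second countable locally compact Hausdorff
space has a total variation: a Radon measure `μ` on `G` such that for every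
nonnegative `φ ∈ C_c(G)`,
`∫ φ dμ = sup { |ν f| : f ∈ Γ_c(G;𝔅), ‖f x‖ ≤ φ x for all x }`. -/
theorem USCBanachBundle.exists_total_variation
    {G : Type} [TopologicalSpace G] [SecondCountableTopology G]
    [LocallyCompactSpace G] [T2Space G]
    [MeasurableSpace G] [BorelSpace G]
    {Fib : G → Type}
    [∀ x, NormedAddCommGroup (Fib x)] [∀ x, NormedSpace ℂ (Fib x)]
    [∀ x, CompleteSpace (Fib x)]
    (B : USCBanachBundle G Fib)
    (ν : (∀ x, Fib x) → ℂ) (hν : B.IsGRM ν) :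
    ∃ μ : Measure G, (∀ K : Set G, IsCompact K → μ K < ⊤) ∧
      ∀ φ : G → ℝ, Continuous φ → HasCompactSupport φ → (∀ x, 0 ≤ φ x) →
        ∫ x, φ x ∂μ =
          sSup { r : ℝ | ∃ f, B.MemGammaC f ∧ (∀ x, ‖f x‖ ≤ φ x) ∧ r = ‖ν f‖ } :=
  USCBanachBundle.exists_total_variation_general B ν hν
end

section
/- Let p : 𝔅 → G be an upper semicontinuous Banach bundle over a second countable locally compact Hausdorff space G and let σ be a generalized Radon measure on 𝔅 which is represented as σ(f) = ∫_G ε_x(f(x)) d|σ|(x) for all f ∈ Γ_c(G;𝔅), where each ε_x ∈ B(x)* has ‖ε_x‖ ≤ 1 and x ↦ ε_x(f(x)) is Borel for every f ∈ Γ_c(G;𝔅). Then: (1) for every f ∈ Σ_c(G;𝔅), the function x ↦ ε_x(f(x)) is a bounded Borel function vanishing off a compact set, so σ extends to a linear functional on Σ_c(G;𝔅) by the same integral formula; and (2) if (f_n) ⊆ Σ_c(G;𝔅) is a uniformly bounded sequence whose supports are contained in a fixed compact set and which converges pointwise to f ∈ Σ_c(G;𝔅), then σ(f_n) → σ(f).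 -/
open MeasureTheory Filter Topology Set

/-! Within one fibre, convergence in the total space is norm convergence: subtracting the limit is
continuous by (B2), and by (B1) the sets `{b | ‖b‖ < r}` are neighbourhoods of `0ₓ`. Hence for
`f ∈ Σ_c` the function `x ↦ ε_x (f x)` is a pointwise limit of the Borel functions
`x ↦ ε_x (fₙ x)`, and part (2) is dominated convergence with the bound `M · 1_K`, integrable
since `|σ|` is finite on compact sets. -/

namespace USCBanachBundle

section TotalSpace

variable {X : Type} [TopologicalSpace X] {Fib : X → Type}
  [∀ x, NormedAddCommGroup (Fib x)] [∀ x, NormedSpace ℂ (Fib x)]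
  [∀ x, CompleteSpace (Fib x)] (B : USCBanachBundle X Fib)
  {ι : Type*} {l : Filter ι} {x : X}

theorem tendsto_mk_add_const {a : ι → Fib x} {v : Fib x}
    (h : Tendsto (fun i => (⟨x, a i⟩ : (y : X) × Fib y)) l
      (@nhds _ B.topTotal (⟨x, v⟩ : (y : X) × Fib y))) (w : Fib x) :
    Tendsto (fun i => (⟨x, a i + w⟩ : (y : X) × Fib y)) l
      (@nhds _ B.topTotal (⟨x, v + w⟩ : (y : X) × Fib y)) := by
  let _ := B.topTotal
  have hpair : Tendsto
      (fun i => (⟨(⟨x, a i⟩, ⟨x, w⟩), rfl⟩ :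
        { q : ((y : X) × Fib y) × ((y : X) × Fib y) // q.1.1 = q.2.1 }))
      l (𝓝 ⟨(⟨x, v⟩, ⟨x, w⟩), rfl⟩) :=
    tendsto_subtype_rng.mpr (h.prodMk_nhds tendsto_const_nhds)
  exact (B.continuous_add.tendsto _).comp hpair

theorem tendsto_zero_of_tendsto_mk_zero {a : ι → Fib x}
    (h : Tendsto (fun i => (⟨x, a i⟩ : (y : X) × Fib y)) l
      (@nhds _ B.topTotal (⟨x, 0⟩ : (y : X) × Fib y))) :
    Tendsto a l (𝓝 0) := by
  let _ := B.topTotal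
  refine Metric.tendsto_nhds.mpr fun r hr => ?_
  simp only [dist_zero_right]
  exact h ((B.isOpen_norm_lt r).mem_nhds (by simpa using hr))

theorem tendsto_of_tendsto_mk {a : ι → Fib x} {v : Fib x}
    (h : Tendsto (fun i => (⟨x, a i⟩ : (y : X) × Fib y)) l
      (@nhds _ B.topTotal (⟨x, v⟩ : (y : X) × Fib y))) :
    Tendsto a l (𝓝 v) := by
  have hsub := B.tendsto_mk_add_const h (-v)
  rw [add_neg_cancel] at hsub
  simpa only [← sub_eq_add_neg, tendsto_sub_nhds_zero_iff] using
    B.tendsto_zero_of_tendsto_mk_zero hsub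

end TotalSpace

section Functionals

variable {X : Type} [MeasurableSpace X] {Fib : X → Type}
  [∀ x, NormedAddCommGroup (Fib x)] [∀ x, NormedSpace ℂ (Fib x)]
  {ε : (x : X) → (Fib x →L[ℂ] ℂ)} {F : ℕ → ∀ x, Fib x} {f : ∀ x, Fib x}

theorem measurable_apply_of_tendsto (hF : ∀ n, Measurable fun x => ε x (F n x))
    (hlim : ∀ x, Tendsto (fun n => F n x) atTop (𝓝 (f x))) :
    Measurable fun x => ε x (f x) :=
  measurable_of_tendsto_metrizable hF <| tendsto_pi_nhds.mpr fun x =>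
    ((ε x).continuous.tendsto _).comp (hlim x)

theorem tendsto_integral_apply_of_tendsto {μ : Measure X} {K : Set X} {M : ℝ}
    (hK : μ K < ⊤) (hε : ∀ x, ‖ε x‖ ≤ 1)
    (hF : ∀ n, AEStronglyMeasurable (fun x => ε x (F n x)) μ)
    (hK0 : ∀ n, ∀ x ∉ K, F n x = 0) (hM : ∀ n x, ‖F n x‖ ≤ M)
    (hlim : ∀ x, Tendsto (fun n => F n x) atTop (𝓝 (f x))) :
    Tendsto (fun n => ∫ x, ε x (F n x) ∂μ) atTop (𝓝 (∫ x, ε x (f x) ∂μ)) := by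
  set T := toMeasurable μ K
  have hbound : Integrable (T.indicator fun _ => M) μ := by
    rw [integrable_indicator_iff (measurableSet_toMeasurable μ K)]
    exact integrableOn_const (by rw [measure_toMeasurable]; exact hK.ne)
  refine tendsto_integral_of_dominated_convergence _ hF hbound (fun n => .of_forall fun x => ?_)
    (.of_forall fun x => ((ε x).continuous.tendsto _).comp (hlim x))
  by_cases hx : x ∈ T
  · rw [indicator_of_mem hx, ← one_mul M]
    exact (ε x).le_of_opNorm_le_of_le (hε x) (hM n x)
  · rw [indicator_of_notMem hx, hK0 n x fun hxK => hx (subset_toMeasurable μ K hxK), map_zero,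
      norm_zero]

end Functionals

section SigmaC

variable {X : Type} [TopologicalSpace X] {Fib : X → Type}
  [∀ x, NormedAddCommGroup (Fib x)] [∀ x, NormedSpace ℂ (Fib x)]
  [∀ x, CompleteSpace (Fib x)] {B : USCBanachBundle X Fib} {f : ∀ x, Fib x}

theorem MemSigmaC.exists_isCompact_eq_zero (hf : B.MemSigmaC f) :
    ∃ K : Set X, IsCompact K ∧ ∀ x ∉ K, f x = 0 := by
  obtain ⟨-, F, K, -, -, -, hK, hK0, hlim⟩ := hf
  refine ⟨K, hK, fun x hx => tendsto_nhds_unique (B.tendsto_of_tendsto_mk (hlim x)) ?_⟩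
  simpa only [hK0 _ x hx] using tendsto_const_nhds

theorem MemSigmaC.measurable_apply [MeasurableSpace X] (hf : B.MemSigmaC f)
    {ε : (x : X) → (Fib x →L[ℂ] ℂ)}
    (hmeas : ∀ g, B.MemGammaC g → Measurable fun x => ε x (g x)) :
    Measurable fun x => ε x (f x) := by
  obtain ⟨-, F, -, -, hF, -, -, -, hlim⟩ := hf
  exact measurable_apply_of_tendsto (fun n => hmeas _ (hF n))
    fun x => B.tendsto_of_tendsto_mk (hlim x)

end SigmaC

end USCBanachBundle

theorem USCBanachBundle.grm_extension_to_sigma_c_general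
    {G : Type} [TopologicalSpace G]
    [MeasurableSpace G]
    {Fib : G → Type}
    [∀ x, NormedAddCommGroup (Fib x)] [∀ x, NormedSpace ℂ (Fib x)]
    [∀ x, CompleteSpace (Fib x)]
    (B : USCBanachBundle G Fib)
    (σ : (∀ x, Fib x) → ℂ)
    (μσ : Measure G) (hμσ : B.IsTotalVariation σ μσ)
    (ε : (x : G) → (Fib x →L[ℂ] ℂ)) (hε : ∀ x, ‖ε x‖ ≤ 1)
    (hmeas : ∀ f, B.MemGammaC f → Measurable fun x => ε x (f x)) :
    (∀ f, B.MemSigmaC f →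
      Measurable (fun x => ε x (f x)) ∧
      (∃ M : ℝ, ∀ x, ‖ε x (f x)‖ ≤ M) ∧
      (∃ K : Set G, IsCompact K ∧ ∀ x ∉ K, ε x (f x) = 0)) ∧
    (∀ (F : ℕ → ∀ x, Fib x) (f : ∀ x, Fib x) (K : Set G) (M : ℝ),
      (∀ n, B.MemSigmaC (F n)) → B.MemSigmaC f →
      IsCompact K → (∀ n, ∀ x ∉ K, F n x = 0) →
      (∀ n x, ‖F n x‖ ≤ M) →
      (∀ x, Filter.Tendsto (fun n => (⟨x, F n x⟩ : (x : G) × Fib x)) Filter.atTop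
        (@nhds _ B.topTotal (⟨x, f x⟩ : (x : G) × Fib x))) →
      Filter.Tendsto (fun n => ∫ x, ε x (F n x) ∂μσ) Filter.atTop
        (nhds (∫ x, ε x (f x) ∂μσ))) := by
  refine ⟨fun f hf => ⟨hf.measurable_apply hmeas, ?_, ?_⟩, ?_⟩
  · obtain ⟨⟨M, hM⟩, -⟩ := hf
    exact ⟨1 * M, fun x => (ε x).le_of_opNorm_le_of_le (hε x) (hM x)⟩
  · obtain ⟨K, hK, hK0⟩ := hf.exists_isCompact_eq_zero
    exact ⟨K, hK, fun x hx => by rw [hK0 x hx, map_zero]⟩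
  · intro F f K M hF _ hK hK0 hM hlim
    exact tendsto_integral_apply_of_tendsto (hμσ.1 K hK) hε
      (fun n => (hF n).measurable_apply hmeas |>.aestronglyMeasurable) hK0 hM
      fun x => B.tendsto_of_tendsto_mk (hlim x)

/-- Lemma 3.9 of the paper: if the generalized Radon measure `σ` is
represented as `σ f = ∫ ε_x (f x) d|σ|(x)` with `‖ε_x‖ ≤ 1`, then (1) for every
`f ∈ Σ_c(G;𝔅)` the function `x ↦ ε_x (f x)` is a bounded Borel function vanishing
off a compact set (so `σ` extends to `Σ_c(G;𝔅)` by the same formula), and (2) the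
extension is sequentially continuous for uniformly bounded, uniformly compactly
supported, pointwise convergent sequences in `Σ_c(G;𝔅)`. -/
theorem USCBanachBundle.grm_extension_to_sigma_c
    {G : Type} [TopologicalSpace G] [SecondCountableTopology G]
    [LocallyCompactSpace G] [T2Space G]
    [MeasurableSpace G] [BorelSpace G]
    {Fib : G → Type}
    [∀ x, NormedAddCommGroup (Fib x)] [∀ x, NormedSpace ℂ (Fib x)]
    [∀ x, CompleteSpace (Fib x)]
    (B : USCBanachBundle G Fib)
    (σ : (∀ x, Fib x) → ℂ) (hσ : B.IsGRM σ)
    (μσ : Measure G) (hμσ : B.IsTotalVariation σ μσ)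
    (ε : (x : G) → (Fib x →L[ℂ] ℂ)) (hε : ∀ x, ‖ε x‖ ≤ 1)
    (hmeas : ∀ f, B.MemGammaC f → Measurable fun x => ε x (f x))
    (hrep : ∀ f, B.MemGammaC f → σ f = ∫ x, ε x (f x) ∂μσ) :
    (∀ f, B.MemSigmaC f →
      Measurable (fun x => ε x (f x)) ∧
      (∃ M : ℝ, ∀ x, ‖ε x (f x)‖ ≤ M) ∧
      (∃ K : Set G, IsCompact K ∧ ∀ x ∉ K, ε x (f x) = 0)) ∧
    (∀ (F : ℕ → ∀ x, Fib x) (f : ∀ x, Fib x) (K : Set G) (M : ℝ),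
      (∀ n, B.MemSigmaC (F n)) → B.MemSigmaC f →
      IsCompact K → (∀ n, ∀ x ∉ K, F n x = 0) →
      (∀ n x, ‖F n x‖ ≤ M) →
      (∀ x, Filter.Tendsto (fun n => (⟨x, F n x⟩ : (x : G) × Fib x)) Filter.atTop
        (@nhds _ B.topTotal (⟨x, f x⟩ : (x : G) × Fib x))) →
      Filter.Tendsto (fun n => ∫ x, ε x (F n x) ∂μσ) Filter.atTop
        (nhds (∫ x, ε x (f x) ∂μσ))) :=
  USCBanachBundle.grm_extension_to_sigma_c_general B σ μσ hμσ ε hε hmeas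
end

section
/- Let p : 𝔅 → G be an upper semicontinuous Banach bundle over a second countable locally compact Hausdorff space G, and suppose that for each x ∈ G there is given ε_x ∈ B(x)* with ‖ε_x‖ ≤ 1 such that x ↦ ε_x(f(x)) is Borel for every f ∈ Γ_c(G;𝔅). Let Z be a second countable locally compact Hausdorff space and m : Z → G a continuous map. If F : Z → 𝔅 is a continuous map with p(F(z)) = m(z) for all z and with {z ∈ Z : F(z) ≠ 0_{m(z)}} contained in a compact set (i.e., F is a compactly supported continuous section of the pull-back bundle m*𝔅), then z ↦ ε_{m(z)}(F(z)) is a Borel function on Z. (The paper applies this with m the multiplication map G^{(2)} → G of a groupoid and with the map κ(x,y,z) = y⁻¹x on G^{(3)}; the proof uses only the continuity of m.) -/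
/-! Near any `z₀`, `F` is uniformly close to `g ∘ m` for a section `g ∈ Γ_c(G;𝔅)` through
`F z₀`, because `z ↦ ‖F z - g (m z)‖` is upper semicontinuous. As `‖ε_x‖ ≤ 1`, on such a
neighbourhood `z ↦ ε_{m z}(F z)` is uniformly close to the Borel function `z ↦ ε_{m z}(g (m z))`.
Gluing these local approximations along a countable subcover yields Borel functions uniformly
close to `z ↦ ε_{m z}(F z)`, which is therefore Borel. -/

open MeasureTheory Filter Topology Set

section MeasurableApprox

variable {α β : Type*} [MeasurableSpace α] [PseudoMetricSpace β] [MeasurableSpace β]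

theorem measurable_of_forall_exists_measurable_dist_le [BorelSpace β] {f : α → β}
    (h : ∀ δ > 0, ∃ g : α → β, Measurable g ∧ ∀ x, dist (f x) (g x) ≤ δ) : Measurable f := by
  choose g hg hfg using fun n : ℕ => h (1 / (n + 1)) Nat.one_div_pos_of_nat
  refine measurable_of_tendsto_metrizable hg (tendsto_pi_nhds.2 fun x => ?_)
  exact tendsto_iff_dist_tendsto_zero.2 <| squeeze_zero (fun _ => dist_nonneg)
    (fun n => (dist_comm _ _).trans_le (hfg n x)) tendsto_one_div_add_atTop_nhds_zero_nat

theorem exists_measurable_dist_le_of_forall_isOpen [TopologicalSpace α] [LindelofSpace α]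
    [OpensMeasurableSpace α] {f : α → β} {δ : ℝ}
    (h : ∀ x, ∃ U : Set α, IsOpen U ∧ x ∈ U ∧
      ∃ g : α → β, Measurable g ∧ ∀ y ∈ U, dist (f y) (g y) ≤ δ) :
    ∃ g : α → β, Measurable g ∧ ∀ x, dist (f x) (g x) ≤ δ := by
  rcases isEmpty_or_nonempty α with hα | hα
  · exact ⟨f, measurable_of_empty f, isEmptyElim⟩
  choose U hUo hxU g hg hfg using h
  obtain ⟨t, htc, htU⟩ := countable_cover_nhds fun x => (hUo x).mem_nhds (hxU x)
  obtain ⟨x₀, hx₀, -⟩ := mem_iUnion₂.1 (htU.symm.subset (mem_univ hα.some))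
  obtain ⟨u, rfl⟩ := htc.exists_eq_range ⟨x₀, hx₀⟩
  have hcover : ∀ x, ∃ n, x ∈ U (u n) := fun x => by
    simpa using htU.symm.subset (mem_univ x)
  classical
  exact ⟨fun x => g (u (Nat.find (hcover x))) x,
    Measurable.find (p := fun n x => x ∈ U (u n)) (fun n => hg _)
      (fun n => (hUo _).measurableSet) hcover,
    fun x => hfg _ _ (Nat.find_spec (hcover x))⟩

end MeasurableApprox

namespace USCBanachBundle

variable {X : Type} [TopologicalSpace X] {Fib : X → Type}
  [∀ x, NormedAddCommGroup (Fib x)] [∀ x, NormedSpace ℂ (Fib x)]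
  [∀ x, CompleteSpace (Fib x)] (B : USCBanachBundle X Fib)

theorem tendsto_mk_add {ι : Type} {l : Filter ι} {n : ι → X} {a b : ∀ i, Fib (n i)}
    {x₀ : X} {a₀ b₀ : Fib x₀}
    (ha : Tendsto (fun i => (⟨n i, a i⟩ : (x : X) × Fib x)) l (@nhds _ B.topTotal ⟨x₀, a₀⟩))
    (hb : Tendsto (fun i => (⟨n i, b i⟩ : (x : X) × Fib x)) l (@nhds _ B.topTotal ⟨x₀, b₀⟩)) :
    Tendsto (fun i => (⟨n i, a i + b i⟩ : (x : X) × Fib x)) l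
      (@nhds _ B.topTotal ⟨x₀, a₀ + b₀⟩) := by
  let := B.topTotal
  have hpair : Tendsto (fun i => (⟨(⟨n i, a i⟩, ⟨n i, b i⟩), rfl⟩ :
      {q : ((x : X) × Fib x) × ((x : X) × Fib x) // q.1.1 = q.2.1})) l
      (𝓝 ⟨(⟨x₀, a₀⟩, ⟨x₀, b₀⟩), rfl⟩) :=
    tendsto_subtype_rng.2 (ha.prodMk_nhds hb)
  exact (B.continuous_add.tendsto _).comp hpair

theorem tendsto_mk_sub {ι : Type} {l : Filter ι} {n : ι → X} {a b : ∀ i, Fib (n i)}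
    {x₀ : X} {a₀ b₀ : Fib x₀}
    (ha : Tendsto (fun i => (⟨n i, a i⟩ : (x : X) × Fib x)) l (@nhds _ B.topTotal ⟨x₀, a₀⟩))
    (hb : Tendsto (fun i => (⟨n i, b i⟩ : (x : X) × Fib x)) l (@nhds _ B.topTotal ⟨x₀, b₀⟩)) :
    Tendsto (fun i => (⟨n i, a i - b i⟩ : (x : X) × Fib x)) l
      (@nhds _ B.topTotal ⟨x₀, a₀ - b₀⟩) := by
  have hneg := ((@Continuous.tendsto _ _ B.topTotal B.topTotal _
    (B.continuous_smul (-1))) _).comp hb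
  simp only [Function.comp_def, neg_one_smul] at hneg
  simpa only [sub_eq_add_neg] using B.tendsto_mk_add ha hneg

theorem isContSection_smul {ψ : X → ℂ} (hψ : Continuous ψ) {f : ∀ x, Fib x}
    (hf : B.IsContSection f) : B.IsContSection fun x => ψ x • f x := by
  let := B.topTotal
  refine continuous_iff_continuousAt.2 fun x₀ => ?_
  have hconst : Tendsto (fun x => (⟨x, ψ x₀ • f x⟩ : (x : X) × Fib x)) (𝓝 x₀)
      (𝓝 ⟨x₀, ψ x₀ • f x₀⟩) := ((B.continuous_smul _).comp hf).tendsto x₀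
  -- upper semicontinuity of the norm keeps `f` locally bounded, so `(ψ x - ψ x₀) • f x → 0`
  have hbdd : ∀ᶠ x in 𝓝 x₀, ‖f x‖ < ‖f x₀‖ + 1 :=
    ((B.isOpen_norm_lt _).preimage hf).mem_nhds (show ‖f x₀‖ < ‖f x₀‖ + 1 by linarith)
  have hψ₀ : Tendsto (fun x => ‖ψ x - ψ x₀‖ * (‖f x₀‖ + 1)) (𝓝 x₀) (𝓝 0) := by
    simpa using ((hψ.tendsto x₀).sub_const (ψ x₀)).norm.mul_const (‖f x₀‖ + 1)
  have hsmall : Tendsto (fun x => (⟨x, (ψ x - ψ x₀) • f x⟩ : (x : X) × Fib x)) (𝓝 x₀)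
      (𝓝 ⟨x₀, 0⟩) := by
    refine B.tendsto_zero _ _ x₀ tendsto_id (squeeze_zero' (.of_forall fun _ => norm_nonneg _)
      ?_ hψ₀)
    filter_upwards [hbdd] with x hx
    rw [norm_smul]
    gcongr
  have hsum := B.tendsto_mk_add hconst hsmall
  simp only [← add_smul, add_sub_cancel, add_zero] at hsum
  exact hsum

theorem exists_memGammaC_eq [LocallyCompactSpace X] [T2Space X] (x : X) (v : Fib x) :
    ∃ g : ∀ y, Fib y, B.MemGammaC g ∧ g x = v := by
  obtain ⟨f, hf, rfl⟩ := B.enough_sections x v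
  obtain ⟨ψ, hψx, -, hψc, -⟩ :=
    exists_continuous_one_zero_of_isCompact isCompact_singleton isClosed_empty
      (disjoint_empty {x})
  refine ⟨fun y => (ψ y : ℂ) • f y, ⟨B.isContSection_smul (by fun_prop) hf, tsupport ψ, hψc,
    fun y hy => by simp [image_eq_zero_of_notMem_tsupport hy]⟩, by simp [hψx rfl]⟩

theorem isOpen_setOf_norm_sub_lt {Z : Type} [TopologicalSpace Z] {m : Z → X}
    {F₁ F₂ : ∀ z, Fib (m z)}
    (hF₁ : @Continuous Z ((x : X) × Fib x) inferInstance B.topTotal fun z => ⟨m z, F₁ z⟩)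
    (hF₂ : @Continuous Z ((x : X) × Fib x) inferInstance B.topTotal fun z => ⟨m z, F₂ z⟩)
    (r : ℝ) : IsOpen {z | ‖F₁ z - F₂ z‖ < r} := by
  let := B.topTotal
  have hsub : Continuous fun z => (⟨m z, F₁ z - F₂ z⟩ : (x : X) × Fib x) :=
    continuous_iff_continuousAt.2 fun z => B.tendsto_mk_sub (hF₁.tendsto z) (hF₂.tendsto z)
  exact (B.isOpen_norm_lt r).preimage hsub

end USCBanachBundle

theorem USCBanachBundle.pullback_section_borel_general
    {G : Type} [TopologicalSpace G]
    [LocallyCompactSpace G] [T2Space G]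
    [MeasurableSpace G] [BorelSpace G]
    {Fib : G → Type}
    [∀ x, NormedAddCommGroup (Fib x)] [∀ x, NormedSpace ℂ (Fib x)]
    [∀ x, CompleteSpace (Fib x)]
    (B : USCBanachBundle G Fib)
    (ε : (x : G) → (Fib x →L[ℂ] ℂ)) (hε : ∀ x, ‖ε x‖ ≤ 1)
    (hmeas : ∀ f, B.MemGammaC f → Measurable fun x => ε x (f x))
    {Z : Type} [TopologicalSpace Z] [SecondCountableTopology Z]
    [MeasurableSpace Z] [BorelSpace Z]
    (m : Z → G) (hm : Continuous m)
    (F : ∀ z, Fib (m z))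
    (hF_cont : @Continuous Z ((x : G) × Fib x) inferInstance B.topTotal
      fun z => ⟨m z, F z⟩) :
    Measurable fun z => ε (m z) (F z) := by
  let := B.topTotal
  refine measurable_of_forall_exists_measurable_dist_le fun δ hδ =>
    exists_measurable_dist_le_of_forall_isOpen fun z₀ => ?_
  obtain ⟨g, hg, hgz₀⟩ := B.exists_memGammaC_eq (m z₀) (F z₀)
  refine ⟨_, B.isOpen_setOf_norm_sub_lt hF_cont (hg.1.comp hm) δ, by simpa [hgz₀] using hδ,
    _, (hmeas g hg).comp hm.measurable, fun z hz => ?_⟩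
  calc dist (ε (m z) (F z)) (ε (m z) (g (m z)))
      = ‖ε (m z) (F z - g (m z))‖ := by rw [dist_eq_norm, map_sub]
    _ ≤ 1 * ‖F z - g (m z)‖ := (ε (m z)).le_of_opNorm_le (hε (m z)) _
    _ ≤ δ := by rw [one_mul]; exact hz.le

/-- Lemmas 3.11/3.12 of the paper: if `x ↦ ε_x (f x)` is Borel for
every `f ∈ Γ_c(G;𝔅)` (with `‖ε_x‖ ≤ 1`), `m : Z → G` is continuous, and `F` is a
compactly supported continuous section of the pull-back bundle `m*𝔅`, then
`z ↦ ε_{m z} (F z)` is Borel on `Z`. -/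
theorem USCBanachBundle.pullback_section_borel
    {G : Type} [TopologicalSpace G] [SecondCountableTopology G]
    [LocallyCompactSpace G] [T2Space G]
    [MeasurableSpace G] [BorelSpace G]
    {Fib : G → Type}
    [∀ x, NormedAddCommGroup (Fib x)] [∀ x, NormedSpace ℂ (Fib x)]
    [∀ x, CompleteSpace (Fib x)]
    (B : USCBanachBundle G Fib)
    (ε : (x : G) → (Fib x →L[ℂ] ℂ)) (hε : ∀ x, ‖ε x‖ ≤ 1)
    (hmeas : ∀ f, B.MemGammaC f → Measurable fun x => ε x (f x))
    {Z : Type} [TopologicalSpace Z] [SecondCountableTopology Z]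
    [LocallyCompactSpace Z] [T2Space Z]
    [MeasurableSpace Z] [BorelSpace Z]
    (m : Z → G) (hm : Continuous m)
    (F : ∀ z, Fib (m z))
    (hF_cont : @Continuous Z ((x : G) × Fib x) inferInstance B.topTotal
      fun z => ⟨m z, F z⟩)
    (hF_supp : ∃ K : Set Z, IsCompact K ∧ ∀ z ∉ K, F z = 0) :
    Measurable fun z => ε (m z) (F z) :=
  USCBanachBundle.pullback_section_borel_general B ε hε hmeas m hm F hF_cont
end

section
/- Let p : 𝔄 → X be an upper semicontinuous Banach bundle. Then scalar multiplication is jointly continuous: the map (λ, a) ↦ λ·a is continuous from ℂ × 𝔄 to 𝔄. -/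
open MeasureTheory Filter Topology Set

/-! Write `c • a = c₀ • a + (c - c₀) • a`. The first summand converges to `c₀ • a₀` by (B3).
By (B1) the norms near `a₀` stay below `‖a₀‖ + 1`, so the norm of the second summand tends to `0`
and (B4) makes it converge to `0` in the fibre of `a₀`. Then (B2) adds the two limits. -/

namespace USCBanachBundle

variable {X : Type} [TopologicalSpace X] {Fib : X → Type}
  [∀ x, NormedAddCommGroup (Fib x)] [∀ x, NormedSpace ℂ (Fib x)]
  [∀ x, CompleteSpace (Fib x)]

local notation "𝓝ᵀ[" B "] " b:100 => @nhds _ (USCBanachBundle.topTotal B) b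

variable (B : USCBanachBundle X Fib) {ι : Type} {l : Filter ι} {π : ι → X}
  {f g : ∀ i, Fib (π i)} {x : X} {u v : Fib x}

theorem eventually_norm_lt {r : ℝ} (hv : ‖v‖ < r) :
    ∀ᶠ b in 𝓝ᵀ[B] (⟨x, v⟩ : (x : X) × Fib x), ‖b.2‖ < r :=
  @IsOpen.mem_nhds _ B.topTotal _ _ (B.isOpen_norm_lt r) hv

theorem tendsto_proj (hf : Tendsto (fun i => (⟨π i, f i⟩ : (x : X) × Fib x)) l
    (𝓝ᵀ[B] ⟨x, v⟩)) : Tendsto π l (𝓝 x) :=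
  (@Continuous.tendsto _ _ B.topTotal _ _ B.continuous_proj _).comp hf

theorem tendsto_add (hf : Tendsto (fun i => (⟨π i, f i⟩ : (x : X) × Fib x)) l
    (𝓝ᵀ[B] ⟨x, u⟩)) (hg : Tendsto (fun i => (⟨π i, g i⟩ : (x : X) × Fib x)) l
    (𝓝ᵀ[B] ⟨x, v⟩)) :
    Tendsto (fun i => (⟨π i, f i + g i⟩ : (x : X) × Fib x)) l (𝓝ᵀ[B] ⟨x, u + v⟩) := by
  let := B.topTotal
  have hpair : Tendsto (fun i => (⟨(⟨π i, f i⟩, ⟨π i, g i⟩), rfl⟩ :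
      { q : ((x : X) × Fib x) × ((x : X) × Fib x) // q.1.1 = q.2.1 })) l
      (𝓝 ⟨(⟨x, u⟩, ⟨x, v⟩), rfl⟩) :=
    tendsto_subtype_rng.2 (hf.prodMk_nhds hg)
  exact (B.continuous_add.tendsto _).comp hpair

theorem tendsto_const_smul (c : ℂ) (hf : Tendsto (fun i => (⟨π i, f i⟩ : (x : X) × Fib x))
    l (𝓝ᵀ[B] ⟨x, v⟩)) :
    Tendsto (fun i => (⟨π i, c • f i⟩ : (x : X) × Fib x)) l (𝓝ᵀ[B] ⟨x, c • v⟩) :=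
  (@Continuous.tendsto _ _ B.topTotal B.topTotal _ (B.continuous_smul c) _).comp hf

theorem tendsto_smul_of_tendsto_zero {c : ι → ℂ} (hc : Tendsto c l (𝓝 0))
    (hf : Tendsto (fun i => (⟨π i, f i⟩ : (x : X) × Fib x)) l (𝓝ᵀ[B] ⟨x, v⟩)) :
    Tendsto (fun i => (⟨π i, c i • f i⟩ : (x : X) × Fib x)) l (𝓝ᵀ[B] ⟨x, 0⟩) := by
  refine B.tendsto_zero l _ x (B.tendsto_proj hf) ?_
  have hbound : ∀ᶠ i in l, ‖f i‖ < ‖v‖ + 1 :=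
    hf.eventually (B.eventually_norm_lt (lt_add_one _))
  have hc' : Tendsto (fun i => ‖c i‖ * (‖v‖ + 1)) l (𝓝 0) := by
    simpa using hc.norm.mul_const (‖v‖ + 1)
  refine squeeze_zero' (.of_forall fun _ => norm_nonneg _) ?_ hc'
  filter_upwards [hbound] with i hi
  rw [norm_smul]
  exact mul_le_mul_of_nonneg_left hi.le (norm_nonneg _)

theorem tendsto_smul {c : ι → ℂ} {c₀ : ℂ} (hc : Tendsto c l (𝓝 c₀))
    (hf : Tendsto (fun i => (⟨π i, f i⟩ : (x : X) × Fib x)) l (𝓝ᵀ[B] ⟨x, v⟩)) :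
    Tendsto (fun i => (⟨π i, c i • f i⟩ : (x : X) × Fib x)) l (𝓝ᵀ[B] ⟨x, c₀ • v⟩) := by
  have hsum := B.tendsto_add (B.tendsto_const_smul c₀ hf)
    (B.tendsto_smul_of_tendsto_zero (tendsto_sub_nhds_zero_iff.2 hc) hf)
  simpa only [← add_smul, add_sub_cancel, add_zero] using hsum

end USCBanachBundle

/-- In an upper semicontinuous Banach bundle, scalar multiplication is
jointly continuous as a map `ℂ × 𝔄 → 𝔄`. -/
theorem USCBanachBundle.continuous_smul_joint
    {X : Type} [TopologicalSpace X] {Fib : X → Type}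
    [∀ x, NormedAddCommGroup (Fib x)] [∀ x, NormedSpace ℂ (Fib x)]
    [∀ x, CompleteSpace (Fib x)]
    (B : USCBanachBundle X Fib) :
    @Continuous (ℂ × ((x : X) × Fib x)) ((x : X) × Fib x)
      (@instTopologicalSpaceProd _ _ inferInstance B.topTotal) B.topTotal
      (fun q => ⟨q.2.1, q.1 • q.2.2⟩) := by
  let := B.topTotal
  exact continuous_iff_continuousAt.2 fun _ =>
    B.tendsto_smul continuous_fst.continuousAt continuous_snd.continuousAt
end
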